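/- arXiv:2404.06131 — 3 statements merged into one kernel-verified Lean document; each statement's English description precedes it below -/
import Mathlib

section
/- Let ℱ = (W, ≼, 𝒱) be a finite poset model. For all w₁, w₂ ∈ W: if w₁ and w₂ satisfy the same SLCS_γ formulas (interpreted on ℱ via ±-paths), then w₁ and w₂ satisfy the same SLCS_η formulas (interpreted on ℱ via ±-paths). -/
/-- An undirected path of length `ℓ` in a poset: consecutive elements comparable. -/
def PosetUPath {W : Type*} [PartialOrder W] (π : ℕ → W) (ℓ : ℕ) : Prop :=
  ∀ i < ℓ, π i ≤ π (i + 1) ∨ π (i + 1) ≤ π i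

/-- A `↓`-path in a poset: an undirected path of length `ℓ ≥ 1` with `π ℓ ≼ π (ℓ-1)`. -/
def PosetDownPath {W : Type*} [PartialOrder W] (π : ℕ → W) (ℓ : ℕ) : Prop :=
  1 ≤ ℓ ∧ PosetUPath π ℓ ∧ π ℓ ≤ π (ℓ - 1)

/-- A `±`-path in a poset: a `↓`-path of length `ℓ ≥ 2` with `π 0 ≼ π 1`. -/
def PosetPMPath {W : Type*} [PartialOrder W] (π : ℕ → W) (ℓ : ℕ) : Prop :=
  2 ≤ ℓ ∧ PosetDownPath π ℓ ∧ π 0 ≤ π 1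

/-- Formulas of `SLCS_γ`. -/
inductive SLCSg (PL : Type*) : Type _
  | prop (p : PL)
  | neg (φ : SLCSg PL)
  | and (φ ψ : SLCSg PL)
  | gamma (φ ψ : SLCSg PL)

/-- Formulas of `SLCS_η`. -/
inductive SLCSe (PL : Type*) : Type _
  | prop (p : PL)
  | neg (φ : SLCSe PL)
  | and (φ ψ : SLCSe PL)
  | eta (φ ψ : SLCSe PL)

/-- Satisfaction of `SLCS_γ` formulas on a poset model, via `±`-paths:
intermediate points (strictly between start and end) must satisfy `φ`. -/
def satG {W PL : Type*} [PartialOrder W] (V : PL → Set W) : SLCSg PL → W → Prop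
  | .prop p, w => w ∈ V p
  | .neg φ, w => ¬ satG V φ w
  | .and φ ψ, w => satG V φ w ∧ satG V ψ w
  | .gamma φ ψ, w =>
      ∃ (π : ℕ → W) (ℓ : ℕ), PosetPMPath π ℓ ∧ π 0 = w ∧ satG V ψ (π ℓ) ∧
        ∀ i, 0 < i → i < ℓ → satG V φ (π i)

/-- Satisfaction of `SLCS_η` formulas on a poset model, via `±`-paths:
all points except the endpoint (including the start) must satisfy `φ`. -/
def satE {W PL : Type*} [PartialOrder W] (V : PL → Set W) : SLCSe PL → W → Prop
  | .prop p, w => w ∈ V p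
  | .neg φ, w => ¬ satE V φ w
  | .and φ ψ, w => satE V φ w ∧ satE V ψ w
  | .eta φ ψ, w =>
      ∃ (π : ℕ → W) (ℓ : ℕ), PosetPMPath π ℓ ∧ π 0 = w ∧ satE V ψ (π ℓ) ∧
        ∀ i < ℓ, satE V φ (π i)

/-! `η(φ, ψ)` differs from `γ(φ, ψ)` only in also demanding `φ` at the starting point, so it is
expressible as `φ ∧ γ(φ, ψ)`. Translating every `η` this way turns each `SLCS_η` formula into an
equivalent `SLCS_γ` formula, and `SLCS_γ`-equivalent points agree on the translations. -/

def SLCSe.toSLCSg {PL : Type*} : SLCSe PL → SLCSg PL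
  | .prop p => .prop p
  | .neg φ => .neg φ.toSLCSg
  | .and φ ψ => .and φ.toSLCSg ψ.toSLCSg
  | .eta φ ψ => .and φ.toSLCSg (.gamma φ.toSLCSg ψ.toSLCSg)

theorem exists_posetPMPath_forall_lt_iff {W : Type*} [PartialOrder W] (P Q : W → Prop) (w : W) :
    (∃ (π : ℕ → W) (ℓ : ℕ), PosetPMPath π ℓ ∧ π 0 = w ∧ Q (π ℓ) ∧ ∀ i < ℓ, P (π i)) ↔
      P w ∧ ∃ (π : ℕ → W) (ℓ : ℕ), PosetPMPath π ℓ ∧ π 0 = w ∧ Q (π ℓ) ∧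
        ∀ i, 0 < i → i < ℓ → P (π i) := by
  constructor
  · rintro ⟨π, ℓ, hπ, rfl, hQ, hP⟩
    exact ⟨hP 0 (by linarith [hπ.1]), π, ℓ, hπ, rfl, hQ, fun i _ hi => hP i hi⟩
  · rintro ⟨hw, π, ℓ, hπ, rfl, hQ, hP⟩
    refine ⟨π, ℓ, hπ, rfl, hQ, fun i hi => ?_⟩
    rcases Nat.eq_zero_or_pos i with rfl | hpos
    · exact hw
    · exact hP i hpos hi

theorem satE_iff_satG_toSLCSg {W PL : Type*} [PartialOrder W] (V : PL → Set W) (Φ : SLCSe PL)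
    (w : W) : satE V Φ w ↔ satG V Φ.toSLCSg w := by
  induction Φ generalizing w with
  | prop p => rfl
  | neg φ ih => simp only [satE, satG, SLCSe.toSLCSg, ih]
  | and φ ψ ihφ ihψ => simp only [satE, satG, SLCSe.toSLCSg, ihφ, ihψ]
  | eta φ ψ ihφ ihψ =>
    simp only [satE, satG, SLCSe.toSLCSg, ← ihφ, ← ihψ]
    exact exists_posetPMPath_forall_lt_iff _ _ w

theorem satG_equiv_implies_satE_equiv_general {W PL : Type*} [PartialOrder W]
    (V : PL → Set W) (w₁ w₂ : W)
    (h : ∀ Φ : SLCSg PL, satG V Φ w₁ ↔ satG V Φ w₂) :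
    ∀ Φ : SLCSe PL, satE V Φ w₁ ↔ satE V Φ w₂ := by
  intro Φ
  rw [satE_iff_satG_toSLCSg, satE_iff_satG_toSLCSg]
  exact h _

/-- On finite poset models, `SLCS_γ` logical equivalence implies
`SLCS_η` logical equivalence. -/
theorem satG_equiv_implies_satE_equiv {W PL : Type*} [PartialOrder W] [Fintype W]
    (V : PL → Set W) (w₁ w₂ : W)
    (h : ∀ Φ : SLCSg PL, satG V Φ w₁ ↔ satG V Φ w₂) :
    ∀ Φ : SLCSe PL, satE V Φ w₁ ↔ satE V Φ w₂ :=
  satG_equiv_implies_satE_equiv_general V w₁ w₂ h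
end

section
/- Let ℱ = (W, ≼, 𝒱) be a finite poset model and B a weak ±-bisimulation on W. For all w₁, w₂ with B(w₁, w₂): for every up-down path π₁ : [0;2h] → W from w₁ there is a ↓-path π₂ : [0;k] → W from w₂ such that B(π₁(2h), π₂(k)) and for each j ∈ [0;k) there is i ∈ [0;2h) with B(π₁(i), π₂(j)). -/
/-- A weak `±`-bisimulation on a poset model. -/
def WeakPMBisim {W PL : Type*} [PartialOrder W] (V : PL → Set W)
    (B : W → W → Prop) : Prop :=
  Symmetric B ∧
  ∀ w₁ w₂, B w₁ w₂ →
    (∀ p, w₁ ∈ V p ↔ w₂ ∈ V p) ∧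
    (∀ u₁ d₁ : W, (w₁ ≤ u₁ ∨ u₁ ≤ w₁) → d₁ ≤ u₁ →
      ∃ (π₂ : ℕ → W) (ℓ₂ : ℕ), PosetPMPath π₂ ℓ₂ ∧ π₂ 0 = w₂ ∧
        B d₁ (π₂ ℓ₂) ∧ ∀ j < ℓ₂, B w₁ (π₂ j) ∨ B u₁ (π₂ j))

/-- An up-down path of length `2h` (`h ≥ 1`) in a poset. -/
def PosetUpDownPath {W : Type*} [PartialOrder W] (π : ℕ → W) (h : ℕ) : Prop :=
  1 ≤ h ∧ PosetPMPath π (2 * h) ∧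
    ∀ i < h, π (2 * i) ≤ π (2 * i + 1) ∧ π (2 * i + 2) ≤ π (2 * i + 1)

/-! Each up-down step `π₁ (2i) ≼ π₁ (2i+1) ≽ π₁ (2i+2)` of the path is matched, by the defining
clause of a weak `±`-bisimulation, with a `±`-path whose points are related to `π₁ (2i)` or
`π₁ (2i+1)` and whose endpoint is related to `π₁ (2i+2)`. Concatenating these matching paths
gives the required `↓`-path: being a `↓`-path only constrains the last step, which comes from the
final matching path. -/

section Concatenation

variable {W : Type*}

def pathAppend (π σ : ℕ → W) (k : ℕ) : ℕ → W :=
  fun j => if j ≤ k then π j else σ (j - k)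

variable {π σ : ℕ → W} {k j : ℕ}

theorem pathAppend_of_le (hj : j ≤ k) : pathAppend π σ k j = π j := if_pos hj

theorem pathAppend_add (hσ : σ 0 = π k) : pathAppend π σ k (k + j) = σ j := by
  unfold pathAppend
  split_ifs with hj
  · obtain rfl : j = 0 := by omega
    simp [hσ]
  · simp

variable [PartialOrder W] {ℓ : ℕ}

theorem PosetUPath.append (hπ : PosetUPath π k) (hσ : PosetUPath σ ℓ) (h0 : σ 0 = π k) :
    PosetUPath (pathAppend π σ k) (k + ℓ) := by
  intro i hi
  rcases lt_or_ge i k with hik | hki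
  · rw [pathAppend_of_le hik.le, pathAppend_of_le hik]
    exact hπ i hik
  · obtain ⟨m, rfl⟩ := Nat.exists_eq_add_of_le hki
    rw [pathAppend_add h0, show k + m + 1 = k + (m + 1) by omega, pathAppend_add h0]
    exact hσ m (by omega)

theorem PosetUPath.append_downPath (hπ : PosetUPath π k) (hσ : PosetDownPath σ ℓ)
    (h0 : σ 0 = π k) : PosetDownPath (pathAppend π σ k) (k + ℓ) := by
  obtain ⟨hℓ, hσ, hσlast⟩ := hσ
  refine ⟨by omega, hπ.append hσ h0, ?_⟩
  rw [pathAppend_add h0, show k + ℓ - 1 = k + (ℓ - 1) by omega, pathAppend_add h0]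
  exact hσlast

end Concatenation

namespace WeakPMBisim

variable {W PL : Type*} [PartialOrder W] {V : PL → Set W} {B : W → W → Prop}

theorem exists_downPath_of_le_of_le (hB : WeakPMBisim V B) {w₁ w₂ u d : W} (hw : B w₁ w₂)
    (hu : w₁ ≤ u) (hd : d ≤ u) :
    ∃ (π : ℕ → W) (ℓ : ℕ), PosetDownPath π ℓ ∧ π 0 = w₂ ∧ B d (π ℓ) ∧
      ∀ j < ℓ, B w₁ (π j) ∨ B u (π j) := by
  obtain ⟨π, ℓ, hπ, h0, hend, hmid⟩ := (hB.2 w₁ w₂ hw).2 u d (Or.inl hu) hd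
  exact ⟨π, ℓ, hπ.2.1, h0, hend, hmid⟩

theorem exists_downPath_of_upDown (hB : WeakPMBisim V B) {π₁ : ℕ → W} {w₂ : W}
    (hw : B (π₁ 0) w₂) {n : ℕ} (hn : 1 ≤ n)
    (hπ₁ : ∀ i < n, π₁ (2 * i) ≤ π₁ (2 * i + 1) ∧ π₁ (2 * i + 2) ≤ π₁ (2 * i + 1)) :
    ∃ (π₂ : ℕ → W) (k : ℕ), PosetDownPath π₂ k ∧ π₂ 0 = w₂ ∧
      B (π₁ (2 * n)) (π₂ k) ∧ ∀ j < k, ∃ i < 2 * n, B (π₁ i) (π₂ j) := by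
  induction n, hn using Nat.le_induction with
  | base =>
    obtain ⟨hu, hd⟩ := hπ₁ 0 one_pos
    obtain ⟨π₂, k, hπ₂, h0, hend, hmid⟩ := hB.exists_downPath_of_le_of_le hw hu hd
    refine ⟨π₂, k, hπ₂, h0, hend, fun j hj => ?_⟩
    rcases hmid j hj with hb | hb
    · exact ⟨0, by omega, hb⟩
    · exact ⟨1, by omega, hb⟩
  | succ n _ ih =>
    obtain ⟨π₂, k, hπ₂, h0, hend, hmid⟩ := ih fun i hi => hπ₁ i (by omega)
    obtain ⟨hu, hd⟩ := hπ₁ n (by omega)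
    obtain ⟨σ, ℓ, hσ, hσ0, hσend, hσmid⟩ := hB.exists_downPath_of_le_of_le hend hu hd
    refine ⟨pathAppend π₂ σ k, k + ℓ, hπ₂.2.1.append_downPath hσ hσ0, ?_, ?_, fun j hj => ?_⟩
    · rwa [pathAppend_of_le k.zero_le]
    · rwa [pathAppend_add hσ0]
    rcases lt_or_ge j k with hjk | hkj
    · obtain ⟨i, hi, hb⟩ := hmid j hjk
      exact ⟨i, by omega, by rwa [pathAppend_of_le hjk.le]⟩
    · obtain ⟨m, rfl⟩ := Nat.exists_eq_add_of_le hkj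
      rw [pathAppend_add hσ0]
      rcases hσmid m (by omega) with hb | hb
      · exact ⟨2 * n, by omega, hb⟩
      · exact ⟨2 * n + 1, by omega, hb⟩

end WeakPMBisim

theorem weakPMBisim_upDownPath_transfer_general {W PL : Type*} [PartialOrder W]
    (V : PL → Set W) (B : W → W → Prop) (hB : WeakPMBisim V B)
    (w₁ w₂ : W) (h : B w₁ w₂)
    (π₁ : ℕ → W) (h₁ : ℕ) (hπ₁ : PosetUpDownPath π₁ h₁) (hstart : π₁ 0 = w₁) :
    ∃ (π₂ : ℕ → W) (k : ℕ), PosetDownPath π₂ k ∧ π₂ 0 = w₂ ∧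
      B (π₁ (2 * h₁)) (π₂ k) ∧ ∀ j < k, ∃ i < 2 * h₁, B (π₁ i) (π₂ j) := by
  subst hstart
  exact hB.exists_downPath_of_upDown h hπ₁.1 hπ₁.2.2

/-- A weak `±`-bisimulation transfers up-down paths to `↓`-paths. -/
theorem weakPMBisim_upDownPath_transfer {W PL : Type*} [PartialOrder W] [Fintype W]
    (V : PL → Set W) (B : W → W → Prop) (hB : WeakPMBisim V B)
    (w₁ w₂ : W) (h : B w₁ w₂)
    (π₁ : ℕ → W) (h₁ : ℕ) (hπ₁ : PosetUpDownPath π₁ h₁) (hstart : π₁ 0 = w₁) :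
    ∃ (π₂ : ℕ → W) (k : ℕ), PosetDownPath π₂ k ∧ π₂ 0 = w₂ ∧
      B (π₁ (2 * h₁)) (π₂ k) ∧ ∀ j < k, ∃ i < 2 * h₁, B (π₁ i) (π₂ j) :=
  weakPMBisim_upDownPath_transfer_general V B hB w₁ w₂ h π₁ h₁ hπ₁ hstart
end

section
/- In a finite poset model ℱ = (W, ≼, 𝒱), the modal diamond ◇ (where ℱ, w ⊨ ◇Φ iff there exists w' with w ≼ w' and ℱ, w' ⊨ Φ) is expressible in SLCS_γ: for every formula Φ and every w ∈ W, ℱ, w ⊨ ◇Φ if and only if ℱ, w ⊨ γ(Φ, true). -/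
section Gamma

variable {W PL : Type*} [PartialOrder W]

def zigzag (w w' : W) : ℕ → W := fun i => if i = 1 then w' else w

theorem posetPMPath_zigzag {w w' : W} (h : w ≤ w') : PosetPMPath (zigzag w w') 2 := by
  refine ⟨le_rfl, ⟨one_le_two, fun i hi => ?_, by simp [zigzag, h]⟩, by simp [zigzag, h]⟩
  interval_cases i <;> simp [zigzag, h]

theorem satG_gamma_of_le {V : PL → Set W} {φ ψ : SLCSg PL} {w w' : W} (h : w ≤ w')
    (hφ : satG V φ w') (hψ : satG V ψ w) : satG V (.gamma φ ψ) w := by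
  refine ⟨zigzag w w', 2, posetPMPath_zigzag h, rfl, hψ, fun i hi₀ hi₂ => ?_⟩
  obtain rfl : i = 1 := by omega
  exact hφ

theorem exists_le_of_satG_gamma {V : PL → Set W} {φ ψ : SLCSg PL} {w : W}
    (h : satG V (.gamma φ ψ) w) : ∃ w', w ≤ w' ∧ satG V φ w' := by
  obtain ⟨π, ℓ, ⟨hℓ, -, h01⟩, rfl, -, hmid⟩ := h
  exact ⟨π 1, h01, hmid 1 one_pos hℓ⟩

end Gamma

theorem diamond_expressible_in_gamma_general {W PL : Type*} [PartialOrder W]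
    (V : PL → Set W) (Tru : SLCSg PL) (hTru : ∀ w : W, satG V Tru w)
    (Φ : SLCSg PL) (w : W) :
    (∃ w' : W, w ≤ w' ∧ satG V Φ w') ↔ satG V (SLCSg.gamma Φ Tru) w :=
  ⟨fun ⟨_, hle, hΦ⟩ => satG_gamma_of_le hle hΦ (hTru w), exists_le_of_satG_gamma⟩

/-- On finite poset models, the modal diamond `◇` is expressible in `SLCS_γ`:
`w ⊨ ◇Φ` iff `w ⊨ γ(Φ, true)`, where `true` is any formula satisfied by every
element. -/
theorem diamond_expressible_in_gamma {W PL : Type*} [PartialOrder W] [Fintype W]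
    (V : PL → Set W) (Tru : SLCSg PL) (hTru : ∀ w : W, satG V Tru w)
    (Φ : SLCSg PL) (w : W) :
    (∃ w' : W, w ≤ w' ∧ satG V Φ w') ↔ satG V (SLCSg.gamma Φ Tru) w :=
  diamond_expressible_in_gamma_general V Tru hTru Φ w
end
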